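/- arXiv:1607.03004 — 2 statements merged into one kernel-verified Lean document; each statement's English description precedes it below -/
import Mathlib

section
/- For every real number β with 0 < β < 1, all ε₁, ε₂ with 0 < ε₁ ≤ ε₂, and every u ≥ 0, one has χ(u, ε₂²) ≤ χ(u, ε₁²) ≤ u^β, where χ(u, ε²) := β ∫₀^u ((r + ε²)^β − ε^{2β})/r dr. That is, the family ε ↦ χ(·, ε²) is monotone nondecreasing as ε decreases. -/
/-!
Writing the integrand as the chord slope of `x ↦ x ^ β` over `[ε², ε² + r]`, everything follows
from concavity of `x ↦ x ^ β`: chords of a fixed width `r` get flatter as they move right. So the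
integrand decreases in `ε`, and it is bounded by the chord slope over `[0, r]`, namely `r ^ (β - 1)`,
whose integral over `[0, u]` is `u ^ β / β`.
-/

open MeasureTheory Set

/-- The smoothing function `χ(u, ε²) := β ∫₀ᵘ ((r + ε²)^β − ε^{2β})/r dr`
used to approximate `u ↦ u^β`. Powers with real exponents are `Real.rpow`. -/
noncomputable def chi (β ε u : ℝ) : ℝ :=
  β * ∫ r in (0:ℝ)..u, ((r + ε ^ 2) ^ β - ε ^ (2 * β)) / r

theorem ConcaveOn.slope_add_le_slope_add {𝕜 : Type*} [Field 𝕜] [LinearOrder 𝕜]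
    [IsStrictOrderedRing 𝕜] {s : Set 𝕜} {f : 𝕜 → 𝕜} (hf : ConcaveOn 𝕜 s f) {a b r : 𝕜}
    (ha : a ∈ s) (hbr : b + r ∈ s) (hab : a ≤ b) (hr : 0 < r) :
    slope f b (b + r) ≤ slope f a (a + r) := by
  have hb : b ∈ s := hf.1.ordConnected.out ha hbr ⟨hab, by linarith⟩
  have har : a + r ∈ s := hf.1.ordConnected.out ha hbr ⟨by linarith, by linarith⟩
  -- Pass through the chord from `a` to `b + r`.
  calc slope f b (b + r) = slope f (b + r) b := slope_comm f b (b + r)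
    _ ≤ slope f (b + r) a :=
        hf.slope_anti hbr ⟨ha, (by linarith : a < b + r).ne⟩ ⟨hb, (by linarith : b < b + r).ne⟩
          hab
    _ = slope f a (b + r) := slope_comm f (b + r) a
    _ ≤ slope f a (a + r) :=
        hf.slope_anti ha ⟨har, (by linarith : a < a + r).ne'⟩ ⟨hbr, (by linarith : a < b + r).ne'⟩
          (by linarith)

namespace Real

variable {β : ℝ}

theorem slope_rpow_nonneg (hβ : 0 ≤ β) {a b : ℝ} (ha : 0 ≤ a) (hab : a ≤ b) :
    (0 : ℝ) ≤ slope (· ^ β) a b :=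
  (slope_nonneg_iff_of_le hab).2 (rpow_le_rpow ha hab hβ)

theorem slope_rpow_add_le_of_le (hβ0 : 0 ≤ β) (hβ1 : β ≤ 1) {a b r : ℝ} (ha : 0 ≤ a)
    (hab : a ≤ b) (hr : 0 < r) :
    slope (· ^ β) b (b + r) ≤ slope (· ^ β) a (a + r) :=
  (concaveOn_rpow hβ0 hβ1).slope_add_le_slope_add ha (mem_Ici.2 (by linarith)) hab hr

theorem slope_rpow_add_le_rpow_sub_one (hβ0 : 0 < β) (hβ1 : β ≤ 1) {c r : ℝ} (hc : 0 ≤ c)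
    (hr : 0 < r) : slope (· ^ β) c (c + r) ≤ r ^ (β - 1) := by
  calc slope (· ^ β) c (c + r) ≤ slope (· ^ β) 0 (0 + r) :=
        slope_rpow_add_le_of_le hβ0.le hβ1 le_rfl hc hr
    _ = r ^ (β - 1) := by
        rw [slope_def_field, zero_rpow hβ0.ne', zero_add, sub_zero, sub_zero,
          rpow_sub_one hr.ne']

theorem intervalIntegrable_slope_rpow_add (hβ0 : 0 < β) (hβ1 : β ≤ 1) {c u : ℝ} (hc : 0 ≤ c)
    (hu : 0 ≤ u) : IntervalIntegrable (fun r ↦ slope (· ^ β) c (c + r)) volume 0 u := by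
  refine (intervalIntegral.intervalIntegrable_rpow' (r := β - 1) (by linarith)).mono_fun' ?_ ?_
  · simp only [slope_def_field]
    exact Measurable.aestronglyMeasurable (by fun_prop)
  · rw [uIoc_of_le hu]
    filter_upwards [ae_restrict_mem measurableSet_Ioc] with r hr
    rw [norm_of_nonneg (slope_rpow_nonneg hβ0.le hc (by linarith [hr.1]))]
    exact slope_rpow_add_le_rpow_sub_one hβ0 hβ1 hc hr.1

theorem integral_slope_rpow_add_le (hβ0 : 0 < β) (hβ1 : β ≤ 1) {c u : ℝ} (hc : 0 ≤ c)
    (hu : 0 ≤ u) : ∫ r in (0:ℝ)..u, slope (· ^ β) c (c + r) ≤ u ^ β / β :=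
  calc ∫ r in (0:ℝ)..u, slope (· ^ β) c (c + r) ≤ ∫ r in (0:ℝ)..u, r ^ (β - 1) :=
        intervalIntegral.integral_mono_on_of_le_Ioo hu
          (intervalIntegrable_slope_rpow_add hβ0 hβ1 hc hu)
          (intervalIntegral.intervalIntegrable_rpow' (by linarith))
          fun r hr ↦ slope_rpow_add_le_rpow_sub_one hβ0 hβ1 hc hr.1
    _ = u ^ β / β := by
        rw [integral_rpow (Or.inl (by linarith)), sub_add_cancel, zero_rpow hβ0.ne', sub_zero]

end Real

theorem chi_eq_integral_slope {β ε : ℝ} (hε : 0 ≤ ε) (u : ℝ) :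
    chi β ε u = β * ∫ r in (0:ℝ)..u, slope (· ^ β) (ε ^ 2) (ε ^ 2 + r) := by
  have hpow : ε ^ (2 * β) = (ε ^ 2) ^ β := by
    rw [Real.rpow_mul hε, Real.rpow_two]
  simp only [chi, slope_def_field, hpow, add_comm (ε ^ 2), add_sub_cancel_right]

/-- For `0 < β < 1`, `0 < ε₁ ≤ ε₂`, and `u ≥ 0`, one has
`χ(u, ε₂²) ≤ χ(u, ε₁²) ≤ u^β`: the family `ε ↦ χ(·, ε²)` is monotone nondecreasing
as `ε` decreases. -/
theorem chi_antitone_in_eps_and_le_rpow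
    (β : ℝ) (hβ0 : 0 < β) (hβ1 : β < 1)
    (ε₁ ε₂ : ℝ) (hε₁ : 0 < ε₁) (hε : ε₁ ≤ ε₂) (u : ℝ) (hu : 0 ≤ u) :
    chi β ε₂ u ≤ chi β ε₁ u ∧ chi β ε₁ u ≤ u ^ β := by
  have hε₂ : 0 < ε₂ := hε₁.trans_le hε
  have hε_sq : ε₁ ^ 2 ≤ ε₂ ^ 2 := by gcongr
  rw [chi_eq_integral_slope hε₁.le, chi_eq_integral_slope hε₂.le]
  constructor
  · refine mul_le_mul_of_nonneg_left ?_ hβ0.le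
    exact intervalIntegral.integral_mono_on_of_le_Ioo hu
      (Real.intervalIntegrable_slope_rpow_add hβ0 hβ1.le (sq_nonneg ε₂) hu)
      (Real.intervalIntegrable_slope_rpow_add hβ0 hβ1.le (sq_nonneg ε₁) hu)
      fun r hr ↦ Real.slope_rpow_add_le_of_le hβ0.le hβ1.le (sq_nonneg ε₁) hε_sq hr.1
  · calc β * ∫ r in (0:ℝ)..u, slope (· ^ β) (ε₁ ^ 2) (ε₁ ^ 2 + r) ≤ β * (u ^ β / β) :=
          mul_le_mul_of_nonneg_left
            (Real.integral_slope_rpow_add_le hβ0 hβ1.le (sq_nonneg ε₁) hu) hβ0.le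
      _ = u ^ β := mul_div_cancel₀ _ hβ0.ne'
end

section
/- For every real number β with 0 < β < 1 and every u ≥ 0, χ(u, ε²) := β ∫₀^u ((r + ε²)^β − ε^{2β})/r dr converges to u^β as ε → 0⁺. -/
/-!
With `t = ε²`, the integrand `((r + t)^β - t^β)/r` lies between `0` and `r^(β-1)` for `t ≥ 0`
(monotonicity and subadditivity of `x ↦ x^β`), and tends to `r^(β-1)` as `t → 0`. Since
`r^(β-1)` is integrable near `0`, dominated convergence gives the limit `β ∫₀ᵘ r^(β-1) dr = u^β`.
-/

open MeasureTheory Set Filter Topology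

namespace Real

variable {β : ℝ}

lemma norm_rpow_add_sub_rpow_div_le (hβ0 : 0 ≤ β) (hβ1 : β ≤ 1) {r s : ℝ} (hr : 0 < r)
    (hs : 0 ≤ s) : ‖((r + s) ^ β - s ^ β) / r‖ ≤ r ^ (β - 1) := by
  have hmono : s ^ β ≤ (r + s) ^ β := rpow_le_rpow hs (by linarith) hβ0
  have hsub : (r + s) ^ β ≤ r ^ β + s ^ β := rpow_add_le_add_rpow hr.le hs hβ0 hβ1
  rw [norm_of_nonneg (div_nonneg (sub_nonneg.2 hmono) hr.le), rpow_sub_one hr.ne']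
  gcongr
  linarith

lemma tendsto_rpow_add_sub_rpow_div (hβ : 0 < β) {r : ℝ} (hr : r ≠ 0) :
    Tendsto (fun t : ℝ => ((r + t) ^ β - t ^ β) / r) (𝓝 0) (𝓝 (r ^ (β - 1))) := by
  have hcont : Continuous fun t : ℝ => ((r + t) ^ β - t ^ β) / r := by
    have h : Continuous fun t : ℝ => (r + t) ^ β :=
      (continuous_const_add r).rpow_const fun _ => Or.inr hβ.le
    exact (h.sub (continuous_id.rpow_const fun _ => Or.inr hβ.le)).div_const r
  simpa [zero_rpow hβ.ne', rpow_sub_one hr] using hcont.tendsto 0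

lemma integral_rpow_sub_one (hβ : 0 < β) (u : ℝ) :
    ∫ r in (0:ℝ)..u, r ^ (β - 1) = u ^ β / β := by
  rw [integral_rpow (Or.inl (by linarith)), sub_add_cancel, zero_rpow hβ.ne', sub_zero]

theorem tendsto_integral_rpow_add_sub_rpow_div (hβ0 : 0 < β) (hβ1 : β ≤ 1) {u : ℝ}
    (hu : 0 ≤ u) :
    Tendsto (fun t : ℝ => ∫ r in (0:ℝ)..u, ((r + t) ^ β - t ^ β) / r) (𝓝[≥] 0)
      (𝓝 (u ^ β / β)) := by
  rw [← integral_rpow_sub_one hβ0 u]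
  refine intervalIntegral.tendsto_integral_filter_of_dominated_convergence
    (fun r => r ^ (β - 1)) ?_ ?_
    (intervalIntegral.intervalIntegrable_rpow' (by linarith)) ?_
  · refine Eventually.of_forall fun t => Measurable.aestronglyMeasurable ?_
    exact (((measurable_id.add_const t).pow_const β).sub_const _).div measurable_id
  · filter_upwards [self_mem_nhdsWithin] with t (ht : 0 ≤ t)
    refine ae_of_all _ fun r hr => ?_
    rw [uIoc_of_le hu] at hr
    exact norm_rpow_add_sub_rpow_div_le hβ0.le hβ1 hr.1 ht
  · refine ae_of_all _ fun r hr => ?_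
    rw [uIoc_of_le hu] at hr
    exact (tendsto_rpow_add_sub_rpow_div hβ0 hr.1.ne').mono_left nhdsWithin_le_nhds

end Real

/-- For `0 < β < 1` and `u ≥ 0`, `χ(u, ε²)` converges to `u^β` as `ε → 0⁺`. -/
theorem chi_tendsto_rpow
    (β : ℝ) (hβ0 : 0 < β) (hβ1 : β < 1) (u : ℝ) (hu : 0 ≤ u) :
    Tendsto (fun ε : ℝ => chi β ε u) (nhdsWithin 0 (Ioi 0)) (nhds (u ^ β)) := by
  have hsq : Tendsto (fun ε : ℝ => ε ^ 2) (𝓝[>] 0) (𝓝[≥] 0) :=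
    tendsto_nhdsWithin_of_tendsto_nhds_of_eventually_within _
      (by simpa using ((continuous_pow 2).tendsto (0 : ℝ)).mono_left nhdsWithin_le_nhds)
      (Eventually.of_forall fun ε => sq_nonneg ε)
  have hlim := ((Real.tendsto_integral_rpow_add_sub_rpow_div hβ0 hβ1.le hu).comp hsq).const_mul β
  rw [mul_div_cancel₀ _ hβ0.ne'] at hlim
  refine hlim.congr' ?_
  filter_upwards [self_mem_nhdsWithin] with ε (hε : 0 < ε)
  have hpow : ε ^ (2 * β) = (ε ^ 2) ^ β := by exact_mod_cast Real.rpow_natCast_mul hε.le 2 β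
  simp only [Function.comp_apply, chi, hpow]
end
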